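/- arXiv:1801.01096 — 2 statements merged into one kernel-verified Lean document; each statement's English description precedes it below -/
import Mathlib

section
/- Every (p,q)-special partial word (with p, q > 1 coprime) has strong periods p and q but does not have period 1. Consequently H(n,p,q) ≤ H^d(n,p,q) for all n ≥ max(p,q). -/
/-!
A special word with distinguished position `l` is compatible with the period word that has `b`
exactly on the residue class of `l` modulo `p` (and likewise modulo `q`). Period `1` fails because
`l` carries `b` while its neighbours, at distance `1`, carry `a`. Hence the hole counts of special
words of length `n` form a subset of those over which `H(n,p,q)` minimises, and this subset is
nonempty because a special word of every positive length exists.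
-/

/-- A symbol of a partial word (`none` is a hole `◊`) is compatible with a solid letter. -/
def PWCompatible {α : Type*} (x : Option α) (a : α) : Prop :=
  x = none ∨ x = some a

/-- `p` is a strong period of the partial word `X`. -/
def IsStrongPeriod {α : Type*} (X : List (Option α)) (p : ℕ) : Prop :=
  0 < p ∧ ∃ P : ℕ → α, ∀ (i : ℕ) (h : i < X.length), PWCompatible (X.get ⟨i, h⟩) (P (i % p))

/-- A `(p,q)`-special partial word (`none` = hole, `some true` = 'b', `some false` = 'a'). -/
def IsSpecial (S : List (Option Bool)) (p q : ℕ) : Prop :=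
  ∃ l < S.length, ∀ (i : ℕ) (h : i < S.length),
    S.get ⟨i, h⟩ =
      if (p : ℤ) ∣ ((l : ℤ) - i) then
        (if (q : ℤ) ∣ ((l : ℤ) - i) then some true else none)
      else
        (if (q : ℤ) ∣ ((l : ℤ) - i) then none else some false)

/-- The letter of a `(p,q)`-special word at offset `d = l - i` from its distinguished
position `l`. -/
def specialSymbol (p q : ℕ) (d : ℤ) : Option Bool :=
  if (p : ℤ) ∣ d then (if (q : ℤ) ∣ d then some true else none)
  else (if (q : ℤ) ∣ d then none else some false)

section SpecialSymbol

variable (p q : ℕ) (d : ℤ)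

theorem specialSymbol_comm : specialSymbol p q d = specialSymbol q p d := by
  unfold specialSymbol
  split_ifs <;> rfl

theorem specialSymbol_zero : specialSymbol p q 0 = some true := by
  simp [specialSymbol]

theorem pwCompatible_specialSymbol : PWCompatible (specialSymbol p q d) (decide ((p : ℤ) ∣ d)) := by
  unfold specialSymbol PWCompatible
  split_ifs <;> simp [*]

end SpecialSymbol

theorem specialSymbol_of_natAbs_eq_one {p q : ℕ} {d : ℤ} (hp : 1 < p) (hq : 1 < q)
    (hd : d.natAbs = 1) : specialSymbol p q d = some false := by
  have hpd : ¬ (p : ℤ) ∣ d := by rw [Int.natCast_dvd, hd, Nat.dvd_one]; omega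
  have hqd : ¬ (q : ℤ) ∣ d := by rw [Int.natCast_dvd, hd, Nat.dvd_one]; omega
  simp [specialSymbol, hpd, hqd]

section IsSpecial

variable {S : List (Option Bool)} {p q : ℕ}

theorem isSpecial_iff : IsSpecial S p q ↔
    ∃ l < S.length, ∀ (i : ℕ) (h : i < S.length), S.get ⟨i, h⟩ = specialSymbol p q (l - i) :=
  Iff.rfl

theorem isSpecial_comm : IsSpecial S p q ↔ IsSpecial S q p := by
  simp only [isSpecial_iff, specialSymbol_comm p q]

theorem exists_isSpecial (p q : ℕ) {n : ℕ} (hn : 0 < n) :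
    ∃ S : List (Option Bool), IsSpecial S p q ∧ S.length = n :=
  ⟨List.ofFn fun i : Fin n => specialSymbol p q (0 - i),
    isSpecial_iff.2 ⟨0, by simpa, fun i h => by simp⟩, List.length_ofFn⟩

theorem IsSpecial.isStrongPeriod_left (hp : 0 < p) (hS : IsSpecial S p q) :
    IsStrongPeriod S p := by
  obtain ⟨l, -, hl⟩ := isSpecial_iff.1 hS
  refine ⟨hp, fun j => decide (j = l % p), fun i h => ?_⟩
  have hres : i % p = l % p ↔ (p : ℤ) ∣ (l : ℤ) - i := Nat.modEq_iff_dvd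
  simpa only [hl i h, hres] using pwCompatible_specialSymbol p q (l - i)

theorem IsSpecial.isStrongPeriod_right (hq : 0 < q) (hS : IsSpecial S p q) :
    IsStrongPeriod S q :=
  (isSpecial_comm.1 hS).isStrongPeriod_left hq

theorem IsStrongPeriod.eq_of_one {α : Type*} {X : List (Option α)} (hX : IsStrongPeriod X 1)
    {i j : ℕ} (hi : i < X.length) (hj : j < X.length) {a b : α}
    (ha : X.get ⟨i, hi⟩ = some a) (hb : X.get ⟨j, hj⟩ = some b) : a = b := by
  obtain ⟨-, P, hP⟩ := hX
  have hPi := hP i hi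
  have hPj := hP j hj
  simp only [PWCompatible, ha, hb, Nat.mod_one, reduceCtorEq, false_or, Option.some.injEq]
    at hPi hPj
  rw [hPi, hPj]

theorem IsSpecial.not_isStrongPeriod_one (hp : 1 < p) (hq : 1 < q) (hlen : 2 ≤ S.length)
    (hS : IsSpecial S p q) : ¬ IsStrongPeriod S 1 := by
  obtain ⟨l, hl, hS⟩ := isSpecial_iff.1 hS
  obtain ⟨j, hj, hlj⟩ : ∃ j < S.length, ((l : ℤ) - j).natAbs = 1 := by
    rcases l with _ | l
    · exact ⟨1, hlen, rfl⟩
    · exact ⟨l, by omega, by omega⟩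
  intro h1
  have hb : S.get ⟨l, hl⟩ = some true := by rw [hS, sub_self, specialSymbol_zero]
  have ha : S.get ⟨j, hj⟩ = some false := by rw [hS, specialSymbol_of_natAbs_eq_one hp hq hlj]
  exact Bool.noConfusion (h1.eq_of_one hl hj hb ha)

end IsSpecial

theorem special_periods_and_H_le_Hd_general (p q : ℕ) (hp : 1 < p) (hq : 1 < q) :
    (∀ S : List (Option Bool), max p q ≤ S.length → IsSpecial S p q →
      IsStrongPeriod S p ∧ IsStrongPeriod S q ∧ ¬ IsStrongPeriod S 1) ∧
    (∀ n : ℕ, max p q ≤ n →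
      sInf {h : ℕ | ∃ S : List (Option Bool), S.length = n ∧
          IsStrongPeriod S p ∧ IsStrongPeriod S q ∧ ¬ IsStrongPeriod S 1 ∧
          S.count none = h} ≤
        sInf {h : ℕ | ∃ S : List (Option Bool),
          IsSpecial S p q ∧ S.length = n ∧ S.count none = h}) := by
  have periods : ∀ S : List (Option Bool), max p q ≤ S.length → IsSpecial S p q →
      IsStrongPeriod S p ∧ IsStrongPeriod S q ∧ ¬ IsStrongPeriod S 1 := fun S hlen hS =>
    ⟨hS.isStrongPeriod_left (by omega), hS.isStrongPeriod_right (by omega),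
      hS.not_isStrongPeriod_one hp hq (by omega)⟩
  refine ⟨periods, fun n hn => ?_⟩
  obtain ⟨S, hS, hlen⟩ := exists_isSpecial p q (n := n) (by omega)
  refine csInf_le_csInf (OrderBot.bddBelow _) ⟨_, S, hS, hlen, rfl⟩ ?_
  rintro _ ⟨S, hS, rfl, rfl⟩
  obtain ⟨hSp, hSq, hS1⟩ := periods S hn hS
  exact ⟨S, rfl, hSp, hSq, hS1, rfl⟩

/-- Every `(p,q)`-special partial word (with `p, q > 1` coprime) has strong periods `p`
and `q` but not period `1`; consequently, for `n ≥ max(p,q)`,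
`H(n,p,q) ≤ H^d(n,p,q)`, where `H(n,p,q)` is the minimum number of holes in a
partial word of length `n` with strong periods `p`, `q` but without period `1`,
and `H^d(n,p,q)` is the minimum number of holes in a `(p,q)`-special partial word
of length `n`. -/
theorem special_periods_and_H_le_Hd (p q : ℕ) (hp : 1 < p) (hq : 1 < q)
    (hcop : Nat.Coprime p q) :
    (∀ S : List (Option Bool), max p q ≤ S.length → IsSpecial S p q →
      IsStrongPeriod S p ∧ IsStrongPeriod S q ∧ ¬ IsStrongPeriod S 1) ∧
    (∀ n : ℕ, max p q ≤ n →
      sInf {h : ℕ | ∃ S : List (Option Bool), S.length = n ∧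
          IsStrongPeriod S p ∧ IsStrongPeriod S q ∧ ¬ IsStrongPeriod S 1 ∧
          S.count none = h} ≤
        sInf {h : ℕ | ∃ S : List (Option Bool),
          IsSpecial S p q ∧ S.length = n ∧ S.count none = h}) :=
  special_periods_and_H_le_Hd_general p q hp hq
end

section
/- Let p, q > 1 be coprime, and let G̃(h,p,q) = min{n : ⌊n/p⌋ + ⌊n/q⌋ − 2⌊n/(pq)⌋ > h}. Then G̃(k,p,q) + G̃(p+q−3−k, p,q) = pq for all 0 ≤ k ≤ p+q−3. -/
/-- `G(n,p,q) = ⌊n/p⌋ + ⌊n/q⌋ − 2⌊n/(pq)⌋`. -/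
def Gfun (n p q : ℕ) : ℕ := n / p + n / q - 2 * (n / (p * q))

/-- `G̃(h,p,q) = min{n : G(n,p,q) > h}`, the generalized inverse of `G` in `n`. -/
noncomputable def Gtilde (h p q : ℕ) : ℕ := sInf {n : ℕ | h < Gfun n p q}

lemma div_add_div_compl {p c a b : ℕ} (hp : 0 < p) (h : a + b + 1 = c * p) :
    a / p + b / p = c - 1 := by
  have ha := Nat.div_add_mod a p
  have hb := Nat.div_add_mod b p
  have hma : a % p < p := Nat.mod_lt _ hp
  have hmb : b % p < p := Nat.mod_lt _ hp
  set d1 := a / p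
  set m1 := a % p
  set d2 := b / p
  set m2 := b % p
  have h' : p * d1 + m1 + (p * d2 + m2) + 1 = c * p := by omega
  clear_value d1 m1 d2 m2
  clear ha hb h
  have hd : p ∣ m1 + m2 + 1 := by
    have hA : p ∣ p * d1 + p * d2 := Dvd.dvd.add ⟨d1, rfl⟩ ⟨d2, rfl⟩
    have hB : p ∣ p * d1 + m1 + (p * d2 + m2) + 1 := ⟨c, by rw [h', mul_comm]⟩
    have hC := Nat.dvd_sub hB hA
    have heq : p * d1 + m1 + (p * d2 + m2) + 1 - (p * d1 + p * d2) = m1 + m2 + 1 := by omega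
    rwa [heq] at hC
  obtain ⟨t, ht⟩ := hd
  have ht1 : t = 1 := by nlinarith
  subst ht1
  have key : m1 + m2 + 1 = p := by omega
  have h5 : p * (d1 + d2 + 1) = p * c := by
    have h6 : p * d1 + p * d2 + p = c * p := by omega
    linarith [h6, Nat.mul_add p (d1 + d2) 1, Nat.mul_add p d1 d2]
  have hfin : d1 + d2 + 1 = c := Nat.eq_of_mul_eq_mul_left hp h5
  omega

lemma Gfun_refl {p q : ℕ} (hp : 1 < p) (hq : 1 < q) {n : ℕ} (hn : n + 1 ≤ p * q) :
    Gfun n p q + Gfun (p * q - 1 - n) p q = p + q - 2 := by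
  set m := p * q - 1 - n with hm
  have hpq : 0 < p * q := by positivity
  have hnm : n + m + 1 = p * q := by omega
  have e1 : n / p + m / p = q - 1 := div_add_div_compl (by omega) (by rw [hnm, mul_comm])
  have e2 : n / q + m / q = p - 1 := div_add_div_compl (by omega) hnm
  have e3 : n / (p * q) = 0 := Nat.div_eq_of_lt (by omega)
  have e4 : m / (p * q) = 0 := Nat.div_eq_of_lt (by omega)
  simp only [Gfun, e3, e4, mul_zero, Nat.sub_zero]
  omega

lemma Gfun_mono {p q : ℕ} (hp : 1 < p) (hq : 1 < q) : Monotone (fun n => Gfun n p q) := by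
  apply monotone_nat_of_le_succ
  intro n
  show n / p + n / q - 2 * (n / (p * q)) ≤ (n+1)/p + (n+1)/q - 2*((n+1)/(p*q))
  have hc1 : n / (p * q) ≤ n / p := Nat.div_le_div_left (Nat.le_mul_of_pos_right p (by omega)) (by omega)
  have hc2 : n / (p * q) ≤ n / q := Nat.div_le_div_left (Nat.le_mul_of_pos_left q (by omega)) (by omega)
  rw [Nat.succ_div, Nat.succ_div, Nat.succ_div]
  by_cases hpq : p * q ∣ n + 1
  · have hp' : p ∣ n + 1 := (Dvd.intro q rfl).trans hpq
    have hq' : q ∣ n + 1 := (Dvd.intro_left p rfl).trans hpq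
    rw [if_pos hp', if_pos hq', if_pos hpq]
    omega
  · rw [if_neg hpq]
    split_ifs <;> omega

/-- For coprime `p, q > 1`, `G̃(k,p,q) + G̃(p+q−3−k,p,q) = pq` for all `0 ≤ k ≤ p+q−3`. -/
theorem Gtilde_symm (p q k : ℕ) (hp : 1 < p) (hq : 1 < q) (hcop : Nat.Coprime p q)
    (hk : k ≤ p + q - 3) :
    Gtilde k p q + Gtilde (p + q - 3 - k) p q = p * q := by
  have hpq : 2 * 2 ≤ p * q := Nat.mul_le_mul hp hq
  have hG0 : Gfun 0 p q = 0 := by simp [Gfun]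
  have hGtop : Gfun (p * q - 1) p q = p + q - 2 := by
    have := Gfun_refl hp hq (n := 0) (by omega)
    simpa [hG0] using this
  -- the set for k
  have hmem_top : ∀ h, h ≤ p + q - 3 → (p * q - 1) ∈ {n : ℕ | h < Gfun n p q} := by
    intro h hh
    simp only [Set.mem_setOf_eq, hGtop]
    omega
  set a := Gtilde k p q with ha_def
  have hane : ({n : ℕ | k < Gfun n p q}).Nonempty := ⟨p * q - 1, hmem_top k hk⟩
  have ha_mem : k < Gfun a p q := Nat.sInf_mem hane
  have ha_le : a ≤ p * q - 1 := Nat.sInf_le (hmem_top k hk)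
  have ha_pos : 0 < a := by
    rcases Nat.eq_zero_or_pos a with h | h
    · rw [h] at ha_mem; rw [hG0] at ha_mem; omega
    · exact h
  have ha_pred : Gfun (a - 1) p q ≤ k := by
    by_contra hcon
    push_neg at hcon
    have h2 : a ≤ a - 1 := Nat.sInf_le hcon
    omega
  -- set b
  set b := p * q - a with hb_def
  have hb1 : Gfun b p q = p + q - 2 - Gfun (a - 1) p q := by
    have := Gfun_refl hp hq (n := a - 1) (by omega)
    have heq : p * q - 1 - (a - 1) = b := by omega
    rw [heq] at this
    omega
  have hb2 : Gfun (b - 1) p q = p + q - 2 - Gfun a p q := by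
    have := Gfun_refl hp hq (n := a) (by omega)
    have heq : p * q - 1 - a = b - 1 := by omega
    rw [heq] at this
    omega
  have ha_ub : Gfun a p q ≤ p + q - 2 := by
    have := Gfun_mono hp hq (show a ≤ p * q - 1 from ha_le)
    simp only at this
    omega
  have hbmem : b ∈ {n : ℕ | p + q - 3 - k < Gfun n p q} := by
    simp only [Set.mem_setOf_eq, hb1]
    omega
  have hble : ∀ n ∈ {n : ℕ | p + q - 3 - k < Gfun n p q}, b ≤ n := by
    intro n hn
    by_contra hcon
    push_neg at hcon
    have hmono := Gfun_mono hp hq (show n ≤ b - 1 by omega)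
    simp only [Set.mem_setOf_eq] at hn
    simp only at hmono
    omega
  have : Gtilde (p + q - 3 - k) p q = b := by
    apply le_antisymm (Nat.sInf_le hbmem)
    exact le_csInf ⟨b, hbmem⟩ hble
  rw [this]
  omega
end
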